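/- arXiv:2107.00629 — 5 statements merged into one kernel-verified Lean document; each statement's English description precedes it below -/
import Mathlib

section
/- Let s be a natural number and let H be a finite simple graph for which there exists a set S ⊆ V(H) with |S| ≤ s such that the induced subgraph H − S has maximum degree at most 1. Then there exists a set R ⊆ V(H) with |R| ≤ s + 2s(s+1) such that H − R has maximum degree at most 1 and every automorphism f of H satisfies f(R) = R. -/
/-- If `H` has a splitting set of size at most `s` (a set whose removal leaves a
graph of maximum degree at most 1), then it has a splitting set `R` of size at most
`s + 2s(s+1)` with `f(R) = R` for every automorphism `f` of `H`. -/
theorem stmt_1 {V : Type} [Fintype V] [DecidableEq V]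
    (H : SimpleGraph V) [DecidableRel H.Adj] (s : ℕ)
    (hS : ∃ S : Finset V, S.card ≤ s ∧ ∀ v ∉ S, (H.neighborFinset v \ S).card ≤ 1) :
    ∃ R : Finset V, R.card ≤ s + 2 * s * (s + 1) ∧
      (∀ v ∉ R, (H.neighborFinset v \ R).card ≤ 1) ∧
      ∀ f : H ≃g H, R.image ⇑f = R := by
  obtain ⟨S, hScard, hSsplit⟩ := hS
  set A : Finset V := Finset.univ.filter (fun v => s + 2 ≤ (H.neighborFinset v).card)
    with hAdef
  set B : Finset V := Finset.univ.filter
      (fun v => v ∉ A ∧ 2 ≤ (H.neighborFinset v \ A).card) with hBdef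
  -- A is contained in S
  have hAS : A ⊆ S := by
    intro v hv
    by_contra hvS
    have hdeg : s + 2 ≤ (H.neighborFinset v).card := (Finset.mem_filter.mp hv).2
    have h1 : (H.neighborFinset v \ S).card ≤ 1 := hSsplit v hvS
    have h2 : (H.neighborFinset v).card ≤ (H.neighborFinset v \ S).card + S.card :=
      Finset.card_le_card_sdiff_add_card
    omega
  have hAcard : A.card ≤ s := le_trans (Finset.card_le_card hAS) hScard
  -- B is contained in S together with the neighbors (outside A) of S \ A
  have hBsub : B ⊆ S ∪ (S \ A).biUnion (fun u => H.neighborFinset u \ A) := by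
    intro v hv
    obtain ⟨hvA, hv2⟩ := (Finset.mem_filter.mp hv).2
    by_cases hvS : v ∈ S
    · exact Finset.mem_union_left _ hvS
    · have h1 : (H.neighborFinset v \ S).card ≤ 1 := hSsplit v hvS
      have hsub : (H.neighborFinset v \ A) \ S ⊆ H.neighborFinset v \ S := by
        intro x hx
        rw [Finset.mem_sdiff] at hx ⊢
        exact ⟨(Finset.mem_sdiff.mp hx.1).1, hx.2⟩
      have h2 : ((H.neighborFinset v \ A) \ S).card ≤ 1 :=
        le_trans (Finset.card_le_card hsub) h1
      have hne : ((H.neighborFinset v \ A) ∩ S).Nonempty := by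
        by_contra hemp
        rw [Finset.not_nonempty_iff_eq_empty] at hemp
        have : (H.neighborFinset v \ A) \ S = H.neighborFinset v \ A := by
          rw [Finset.sdiff_eq_self_iff_disjoint, Finset.disjoint_left]
          intro x hx hxS
          exact absurd (Finset.mem_inter.mpr ⟨hx, hxS⟩) (by simp [hemp])
        have hcardeq := congrArg Finset.card this
        omega
      obtain ⟨u, hu⟩ := hne
      rw [Finset.mem_inter, Finset.mem_sdiff, SimpleGraph.mem_neighborFinset] at hu
      refine Finset.mem_union_right _ (Finset.mem_biUnion.mpr ⟨u, ?_, ?_⟩)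
      · exact Finset.mem_sdiff.mpr ⟨hu.2, hu.1.2⟩
      · rw [Finset.mem_sdiff, SimpleGraph.mem_neighborFinset]
        exact ⟨hu.1.1.symm, hvA⟩
  have hBcard : B.card ≤ s + s * (s + 1) := by
    have h1 : ((S \ A).biUnion (fun u => H.neighborFinset u \ A)).card ≤
        (S \ A).card * (s + 1) := by
      apply le_trans (Finset.card_biUnion_le)
      apply le_trans (Finset.sum_le_card_nsmul _ _ (s + 1) ?_)
      · simp [mul_comm]
      · intro u hu
        have huA : u ∉ A := (Finset.mem_sdiff.mp hu).2
        have : ¬ (s + 2 ≤ (H.neighborFinset u).card) := by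
          intro h
          exact huA (Finset.mem_filter.mpr ⟨Finset.mem_univ u, h⟩)
        have h2 : (H.neighborFinset u \ A).card ≤ (H.neighborFinset u).card :=
          Finset.card_le_card (Finset.sdiff_subset)
        omega
    have h2 : (S \ A).card ≤ s := le_trans (Finset.card_le_card Finset.sdiff_subset) hScard
    calc B.card ≤ (S ∪ (S \ A).biUnion (fun u => H.neighborFinset u \ A)).card :=
          Finset.card_le_card hBsub
      _ ≤ S.card + ((S \ A).biUnion (fun u => H.neighborFinset u \ A)).card :=
          Finset.card_union_le _ _
      _ ≤ s + s * (s + 1) := by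
          have := Nat.mul_le_mul_right (s + 1) h2
          omega
  refine ⟨A ∪ B, ?_, ?_, ?_⟩
  · have := Finset.card_union_le A B
    have hs : s ≤ s * (s + 1) := Nat.le_mul_of_pos_right s (Nat.succ_pos s)
    nlinarith [hAcard, hBcard]
  · intro v hv
    rw [Finset.mem_union] at hv
    push_neg at hv
    have hvB : ¬ (2 ≤ (H.neighborFinset v \ A).card) := by
      intro h
      exact hv.2 (Finset.mem_filter.mpr ⟨Finset.mem_univ v, hv.1, h⟩)
    have hsub : H.neighborFinset v \ (A ∪ B) ⊆ H.neighborFinset v \ A := by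
      apply Finset.sdiff_subset_sdiff le_rfl Finset.subset_union_left
    have := Finset.card_le_card hsub
    omega
  · -- automorphism invariance
    intro f
    have hnb : ∀ v : V, (H.neighborFinset v).image f = H.neighborFinset (f v) := by
      intro v
      ext w
      simp only [Finset.mem_image, SimpleGraph.mem_neighborFinset]
      constructor
      · rintro ⟨u, hu, rfl⟩
        exact f.map_adj_iff.mpr hu
      · intro h
        refine ⟨f.symm w, ?_, f.apply_symm_apply w⟩
        have := f.map_adj_iff (v := v) (w := f.symm w)
        rw [f.apply_symm_apply] at this
        exact this.mp h
    have hdeg : ∀ v : V, (H.neighborFinset (f v)).card = (H.neighborFinset v).card := by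
      intro v
      rw [← hnb v, Finset.card_image_of_injective _ f.injective]
    have hAf : A.image f = A := by
      apply Finset.eq_of_subset_of_card_le
      · intro w hw
        obtain ⟨v, hv, rfl⟩ := Finset.mem_image.mp hw
        have := (Finset.mem_filter.mp hv).2
        exact Finset.mem_filter.mpr ⟨Finset.mem_univ _, by rw [hdeg]; exact this⟩
      · rw [Finset.card_image_of_injective _ f.injective]
    have hAmem : ∀ v : V, f v ∈ A ↔ v ∈ A := by
      intro v
      constructor
      · intro h
        rw [← hAf] at h
        obtain ⟨u, hu, hfu⟩ := Finset.mem_image.mp h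
        rwa [← f.injective hfu]
      · intro h
        rw [← hAf]
        exact Finset.mem_image_of_mem _ h
    have hcardNA : ∀ v : V, (H.neighborFinset (f v) \ A).card =
        (H.neighborFinset v \ A).card := by
      intro v
      rw [← hnb v, ← hAf, ← Finset.image_sdiff _ _ f.injective,
        Finset.card_image_of_injective _ f.injective, hAf]
    have hBf : B.image f = B := by
      apply Finset.eq_of_subset_of_card_le
      · intro w hw
        obtain ⟨v, hv, rfl⟩ := Finset.mem_image.mp hw
        obtain ⟨hvA, hv2⟩ := (Finset.mem_filter.mp hv).2
        refine Finset.mem_filter.mpr ⟨Finset.mem_univ _, ?_, ?_⟩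
        · rw [hAmem]; exact hvA
        · rw [hcardNA]; exact hv2
      · rw [Finset.card_image_of_injective _ f.injective]
    rw [Finset.image_union, hAf, hBf]
end

section
/- Let q ≥ 3 be an odd integer, and let Q be the simple graph with vertex set {u₁, u₂, u₃, w₁, …, w_q} whose edges are: {u₂, w_j} and {u₃, w_j} for all j with 1 ≤ j ≤ q, and {u₁, w_j} for all j with 1 ≤ j ≤ (q+1)/2. For a subset T ⊆ {u₁, u₂, u₃}, let m_T denote the number of matchings M in Q such that the set of vertices of {u₁, u₂, u₃} covered by M is exactly T. Then m_∅ = 1, m_{{u₂}} = m_{{u₃}} = q, m_{{u₂,u₃}} = q(q−1), and m_{{u₁,u₂,u₃}} = (q+1)(q−1)(q−2)/2. In particular, modulo q one has m_∅ ≡ 1, m_{{u₁,u₂,u₃}} ≡ 1, and m_{{u₂}} ≡ m_{{u₃}} ≡ m_{{u₂,u₃}} ≡ 0. -/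
/-- A matching in a graph, given as a finite set of edges of the graph that are pairwise
vertex-disjoint. -/
def IsMatchingIn {V : Type*} (G : SimpleGraph V) (M : Finset (Sym2 V)) : Prop :=
  (∀ e ∈ M, e ∈ G.edgeSet) ∧ ∀ e ∈ M, ∀ f ∈ M, e ≠ f → ∀ v ∈ e, v ∉ f

/-- The consistency gadget `Q` for modulus `q`: vertices `u₁ = Sum.inl 0`, `u₂ = Sum.inl 1`,
`u₃ = Sum.inl 2` and gadget vertices `w_j = Sum.inr j` for `j : Fin q`; `u₂` and `u₃` are
joined to all gadget vertices, while `u₁` is joined to the first `(q+1)/2` of them. -/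
def gadgetGraph (q : ℕ) : SimpleGraph (Fin 3 ⊕ Fin q) :=
  SimpleGraph.fromRel fun a b =>
    match a, b with
    | Sum.inl i, Sum.inr j => i = 1 ∨ i = 2 ∨ (i = 0 ∧ (j : ℕ) < (q + 1) / 2)
    | _, _ => False

/-- `gadgetCount q T` is the number `m_T` of matchings `M` in the gadget graph such that the
set of vertices among `{u₁, u₂, u₃}` covered by `M` is exactly `T`. -/
noncomputable def gadgetCount (q : ℕ) (T : Finset (Fin 3)) : ℕ :=
  Nat.card {M : Finset (Sym2 (Fin 3 ⊕ Fin q)) //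
    IsMatchingIn (gadgetGraph q) M ∧
    ∀ i : Fin 3, (∃ e ∈ M, (Sum.inl i : Fin 3 ⊕ Fin q) ∈ e) ↔ i ∈ T}

def Pq (q : ℕ) (i : Fin 3) (j : Fin q) : Prop :=
  i = 1 ∨ i = 2 ∨ (i = 0 ∧ (j : ℕ) < (q + 1) / 2)

theorem mem_gadget_edge (q : ℕ) (e : Sym2 (Fin 3 ⊕ Fin q)) :
    e ∈ (gadgetGraph q).edgeSet ↔ ∃ (i : Fin 3) (j : Fin q),
      Pq q i j ∧ e = s(Sum.inl i, Sum.inr j) := by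
  induction e using Sym2.ind with
  | _ a b =>
    simp only [SimpleGraph.mem_edgeSet, gadgetGraph, SimpleGraph.fromRel_adj]
    constructor
    · rintro ⟨hne, h | h⟩
      · match a, b, h with
        | Sum.inl i, Sum.inr j, h => exact ⟨i, j, h, rfl⟩
      · match a, b, h with
        | Sum.inr j, Sum.inl i, h => exact ⟨i, j, h, Sym2.eq_swap⟩
    · rintro ⟨i, j, hij, he⟩
      rw [Sym2.eq_iff] at he
      rcases he with ⟨rfl, rfl⟩ | ⟨rfl, rfl⟩
      · exact ⟨by simp, Or.inl hij⟩
      · exact ⟨by simp, Or.inr hij⟩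

variable {q : ℕ} {M : Finset (Sym2 (Fin 3 ⊕ Fin q))}

theorem edge_ne {i i' : Fin 3} {j j' : Fin q} (h : i ≠ i') :
    s(Sum.inl i, (Sum.inr j : Fin 3 ⊕ Fin q)) ≠ s(Sum.inl i', Sum.inr j') := by
  simp [Sym2.eq_iff, h]

theorem unique_j (hM : IsMatchingIn (gadgetGraph q) M) {i : Fin 3} {j j' : Fin q}
    (h1 : s(Sum.inl i, (Sum.inr j : Fin 3 ⊕ Fin q)) ∈ M)
    (h2 : s(Sum.inl i, (Sum.inr j' : Fin 3 ⊕ Fin q)) ∈ M) : j = j' := by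
  by_contra hne
  have hef : s(Sum.inl i, (Sum.inr j : Fin 3 ⊕ Fin q)) ≠ s(Sum.inl i, Sum.inr j') := by
    simp [Sym2.eq_iff, hne]
  exact hM.2 _ h1 _ h2 hef (Sum.inl i) (by simp) (by simp)

theorem distinct_j (hM : IsMatchingIn (gadgetGraph q) M) {i i' : Fin 3} {j j' : Fin q}
    (hii : i ≠ i')
    (h1 : s(Sum.inl i, (Sum.inr j : Fin 3 ⊕ Fin q)) ∈ M)
    (h2 : s(Sum.inl i', (Sum.inr j' : Fin 3 ⊕ Fin q)) ∈ M) : j ≠ j' := by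
  rintro rfl
  exact hM.2 _ h1 _ h2 (edge_ne hii) (Sum.inr j) (by simp) (by simp)

theorem cover_edge {T : Finset (Fin 3)}
    (hcov : ∀ i : Fin 3, (∃ e ∈ M, (Sum.inl i : Fin 3 ⊕ Fin q) ∈ e) ↔ i ∈ T)
    (hM : IsMatchingIn (gadgetGraph q) M) {i : Fin 3} (hi : i ∈ T) :
    ∃ j : Fin q, Pq q i j ∧ s(Sum.inl i, (Sum.inr j : Fin 3 ⊕ Fin q)) ∈ M := by
  obtain ⟨e, heM, hie⟩ := (hcov i).2 hi
  obtain ⟨i', j, hP, rfl⟩ := (mem_gadget_edge q e).1 (hM.1 e heM)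
  rw [Sym2.mem_iff] at hie
  rcases hie with h | h
  · obtain rfl : i = i' := Sum.inl.inj h
    exact ⟨j, hP, heM⟩
  · exact absurd h (by simp)

theorem mem_M {T : Finset (Fin 3)}
    (hcov : ∀ i : Fin 3, (∃ e ∈ M, (Sum.inl i : Fin 3 ⊕ Fin q) ∈ e) ↔ i ∈ T)
    (hM : IsMatchingIn (gadgetGraph q) M) {e} (he : e ∈ M) :
    ∃ i ∈ T, ∃ j : Fin q, Pq q i j ∧ e = s(Sum.inl i, Sum.inr j) := by
  obtain ⟨i, j, hP, rfl⟩ := (mem_gadget_edge q e).1 (hM.1 e he)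
  exact ⟨i, (hcov i).1 ⟨_, he, by simp⟩, j, hP, rfl⟩


theorem count_empty (q : ℕ) : gadgetCount q ∅ = 1 := by
  rw [gadgetCount, Nat.card_eq_one_iff_unique]
  constructor
  · constructor
    rintro ⟨M, hM, hcov⟩ ⟨M', hM', hcov'⟩
    have hME : ∀ (N : Finset (Sym2 (Fin 3 ⊕ Fin q))), IsMatchingIn (gadgetGraph q) N →
        (∀ i : Fin 3, (∃ e ∈ N, (Sum.inl i : Fin 3 ⊕ Fin q) ∈ e) ↔ i ∈ (∅ : Finset (Fin 3))) →
        N = ∅ := by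
      intro N hN hcN
      ext e
      simp only [Finset.notMem_empty, iff_false]
      intro he
      obtain ⟨i, hi, _⟩ := mem_M hcN hN he
      simp at hi
    simp [Subtype.ext_iff, hME M hM hcov, hME M' hM' hcov']
  · refine ⟨⟨∅, ⟨by simp, by simp⟩, by simp⟩⟩

theorem count_single (q : ℕ) {i₀ : Fin 3} (hi₀ : i₀ = 1 ∨ i₀ = 2) :
    gadgetCount q {i₀} = q := by
  have hP : ∀ j : Fin q, Pq q i₀ j := fun j => hi₀.imp id Or.inl
  rw [gadgetCount]
  have := Nat.card_eq_of_bijective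
    (f := fun j : Fin q =>
      (⟨{s(Sum.inl i₀, Sum.inr j)}, ⟨?_, ?_⟩, ?_⟩ :
        {M : Finset (Sym2 (Fin 3 ⊕ Fin q)) //
          IsMatchingIn (gadgetGraph q) M ∧
          ∀ i : Fin 3, (∃ e ∈ M, (Sum.inl i : Fin 3 ⊕ Fin q) ∈ e) ↔ i ∈ ({i₀} : Finset (Fin 3))}))
    ?_
  · rw [← this, Nat.card_eq_fintype_card, Fintype.card_fin]
  · intro e he
    rw [Finset.mem_singleton] at he
    subst he
    rw [mem_gadget_edge]
    exact ⟨i₀, _, hP _, rfl⟩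
  · intro e he f hf hef
    rw [Finset.mem_singleton] at he hf
    exact absurd (he.trans hf.symm) hef
  · intro i
    simp [Sym2.mem_iff, eq_comm]
  · constructor
    · intro j j' hjj'
      have := congrArg (fun x => x.1) hjj'
      simpa [Sym2.eq_iff] using this
    · rintro ⟨M, hM, hcov⟩
      obtain ⟨j, hPj, hjM⟩ := cover_edge hcov hM (Finset.mem_singleton_self i₀)
      refine ⟨j, ?_⟩
      ext1
      dsimp
      ext e
      simp only [Finset.mem_singleton]
      constructor
      · rintro rfl; exact hjM
      · intro he
        obtain ⟨i, hi, j', hP', rfl⟩ := mem_M hcov hM he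
        rw [Finset.mem_singleton] at hi
        subst hi
        rw [unique_j hM he hjM]

theorem card_offdiag (q : ℕ) : Nat.card {p : Fin q × Fin q // p.1 ≠ p.2} = q * q - q := by
  rw [Nat.card_eq_fintype_card, Fintype.card_subtype]
  have : Finset.univ.filter (fun p : Fin q × Fin q => p.1 ≠ p.2) = Finset.univ.offDiag := by
    ext p
    simp [Finset.mem_offDiag]
  rw [this, Finset.offDiag_card, Finset.card_univ, Fintype.card_fin]

theorem count_pair (q : ℕ) : gadgetCount q {1, 2} = q * q - q := by
  rw [gadgetCount]
  have := Nat.card_eq_of_bijective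
    (f := fun p : {p : Fin q × Fin q // p.1 ≠ p.2} =>
      (⟨{s(Sum.inl 1, Sum.inr p.1.1), s(Sum.inl 2, Sum.inr p.1.2)}, ⟨?_, ?_⟩, ?_⟩ :
        {M : Finset (Sym2 (Fin 3 ⊕ Fin q)) //
          IsMatchingIn (gadgetGraph q) M ∧
          ∀ i : Fin 3, (∃ e ∈ M, (Sum.inl i : Fin 3 ⊕ Fin q) ∈ e) ↔ i ∈ ({1, 2} : Finset (Fin 3))}))
    ?_
  · rw [← this, card_offdiag]
  · intro e he
    rw [Finset.mem_insert, Finset.mem_singleton] at he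
    rw [mem_gadget_edge]
    rcases he with rfl | rfl
    · exact ⟨1, _, Or.inl rfl, rfl⟩
    · exact ⟨2, _, Or.inr (Or.inl rfl), rfl⟩
  · intro e he f hf hef v hv
    rw [Finset.mem_insert, Finset.mem_singleton] at he hf
    have hab := p.2
    rcases he with rfl | rfl <;> rcases hf with rfl | rfl <;>
      simp_all [Sym2.mem_iff] <;> rcases hv with rfl | rfl <;> simp_all [eq_comm]
  · intro i
    fin_cases i <;> simp [Sym2.mem_iff]
  · constructor
    · rintro ⟨⟨a, b⟩, hab⟩ ⟨⟨a', b'⟩, hab'⟩ h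
      have h := congrArg (fun x => x.1) h
      dsimp at h
      have h1 : s(Sum.inl 1, (Sum.inr a : Fin 3 ⊕ Fin q)) ∈
          ({s(Sum.inl 1, Sum.inr a'), s(Sum.inl 2, Sum.inr b')} :
            Finset (Sym2 (Fin 3 ⊕ Fin q))) := by
        rw [← h]; simp
      have h2 : s(Sum.inl 2, (Sum.inr b : Fin 3 ⊕ Fin q)) ∈
          ({s(Sum.inl 1, Sum.inr a'), s(Sum.inl 2, Sum.inr b')} :
            Finset (Sym2 (Fin 3 ⊕ Fin q))) := by
        rw [← h]; simp
      rw [Finset.mem_insert, Finset.mem_singleton] at h1 h2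
      rcases h1 with h1 | h1
      · rcases h2 with h2 | h2
        · exact absurd h2 (edge_ne (by decide))
        · simp_all [Sym2.eq_iff]
      · exact absurd h1 (edge_ne (by decide))
    · rintro ⟨M, hM, hcov⟩
      obtain ⟨a, hPa, haM⟩ := cover_edge hcov hM (show (1:Fin 3) ∈ ({1,2}:Finset (Fin 3)) by decide)
      obtain ⟨b, hPb, hbM⟩ := cover_edge hcov hM (show (2:Fin 3) ∈ ({1,2}:Finset (Fin 3)) by decide)
      have hab : a ≠ b := distinct_j hM (by decide) haM hbM
      refine ⟨⟨⟨a, b⟩, hab⟩, ?_⟩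
      ext1
      dsimp
      ext e
      simp only [Finset.mem_insert, Finset.mem_singleton]
      constructor
      · rintro (rfl | rfl)
        · exact haM
        · exact hbM
      · intro he
        obtain ⟨i, hi, j', hP', rfl⟩ := mem_M hcov hM he
        rw [Finset.mem_insert, Finset.mem_singleton] at hi
        rcases hi with rfl | rfl
        · left; rw [unique_j hM he haM]
        · right; rw [unique_j hM he hbM]
theorem card_lt_filter (q h : ℕ) (hle : h ≤ q) :
    (Finset.univ.filter fun a : Fin q => (a:ℕ) < h).card = h := by
  have key : (Finset.univ.filter fun a : Fin q => (a:ℕ) < h).card = (Finset.range h).card := by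
    refine Finset.card_bij (fun a _ => (a : ℕ)) ?_ ?_ ?_
    · intro a ha; simp at ha ⊢; omega
    · intro a ha b hb hab; exact Fin.val_injective hab
    · intro b hb
      simp at hb
      exact ⟨⟨b, lt_of_lt_of_le hb hle⟩, by simp [hb], rfl⟩
  rw [key, Finset.card_range]

theorem card_triple (q : ℕ) (hq : 3 ≤ q) :
    Nat.card {t : Fin q × Fin q × Fin q //
      (t.1 : ℕ) < (q+1)/2 ∧ t.1 ≠ t.2.1 ∧ t.1 ≠ t.2.2 ∧ t.2.1 ≠ t.2.2} =
    ((q+1)/2) * ((q-1) * (q-2)) := by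
  have hinner : ∀ a : Fin q,
      Fintype.card {bc : Fin q × Fin q //
        (a : ℕ) < (q+1)/2 ∧ a ≠ bc.1 ∧ a ≠ bc.2 ∧ bc.1 ≠ bc.2} =
      if (a : ℕ) < (q+1)/2 then (q-1) * (q-2) else 0 := by
    intro a
    by_cases ha : (a : ℕ) < (q+1)/2
    · rw [if_pos ha]
      have e : {bc : Fin q × Fin q //
          (a : ℕ) < (q+1)/2 ∧ a ≠ bc.1 ∧ a ≠ bc.2 ∧ bc.1 ≠ bc.2} ≃
          {bc : Fin q × Fin q // bc ∈ (Finset.univ.erase a).offDiag} :=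
        Equiv.subtypeEquivRight (fun bc => by
          constructor
          · rintro ⟨-, h2, h3, h4⟩
            exact Finset.mem_offDiag.2 ⟨Finset.mem_erase.2 ⟨Ne.symm h2, Finset.mem_univ _⟩,
              Finset.mem_erase.2 ⟨Ne.symm h3, Finset.mem_univ _⟩, h4⟩
          · intro hbc
            obtain ⟨hb, hc, hd⟩ := Finset.mem_offDiag.1 hbc
            exact ⟨ha, Ne.symm (Finset.mem_erase.1 hb).1, Ne.symm (Finset.mem_erase.1 hc).1, hd⟩)
      rw [Fintype.card_congr e, Fintype.card_coe, Finset.offDiag_card,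
        Finset.card_erase_of_mem (Finset.mem_univ a), Finset.card_univ, Fintype.card_fin,
        ← Nat.mul_sub_one]
      congr 1
    · rw [if_neg ha]
      exact Fintype.card_eq_zero_iff.2 ⟨fun x => ha x.2.1⟩
  have e0 : {t : Fin q × Fin q × Fin q //
      (t.1 : ℕ) < (q+1)/2 ∧ t.1 ≠ t.2.1 ∧ t.1 ≠ t.2.2 ∧ t.2.1 ≠ t.2.2} ≃
      Σ a : Fin q, {bc : Fin q × Fin q //
        (a : ℕ) < (q+1)/2 ∧ a ≠ bc.1 ∧ a ≠ bc.2 ∧ bc.1 ≠ bc.2} :=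
    Equiv.subtypeProdEquivSigmaSubtype
      (fun (a : Fin q) (bc : Fin q × Fin q) =>
        (a : ℕ) < (q+1)/2 ∧ a ≠ bc.1 ∧ a ≠ bc.2 ∧ bc.1 ≠ bc.2)
  rw [Nat.card_eq_fintype_card, Fintype.card_congr e0, Fintype.card_sigma]
  simp_rw [hinner]
  rw [Finset.sum_ite, Finset.sum_const, Finset.sum_const_zero, add_zero, smul_eq_mul]
  congr 1
  exact card_lt_filter q _ (by omega)

theorem count_triple_match (q : ℕ) (hq : 3 ≤ q) :
    gadgetCount q {0, 1, 2} = ((q+1)/2) * ((q-1) * (q-2)) := by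
  rw [gadgetCount]
  have key := Nat.card_eq_of_bijective
    (f := fun t : {t : Fin q × Fin q × Fin q //
        (t.1 : ℕ) < (q+1)/2 ∧ t.1 ≠ t.2.1 ∧ t.1 ≠ t.2.2 ∧ t.2.1 ≠ t.2.2} =>
      (⟨{s(Sum.inl 0, Sum.inr t.1.1), s(Sum.inl 1, Sum.inr t.1.2.1),
          s(Sum.inl 2, Sum.inr t.1.2.2)}, ⟨?_, ?_⟩, ?_⟩ :
        {M : Finset (Sym2 (Fin 3 ⊕ Fin q)) //
          IsMatchingIn (gadgetGraph q) M ∧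
          ∀ i : Fin 3, (∃ e ∈ M, (Sum.inl i : Fin 3 ⊕ Fin q) ∈ e) ↔
            i ∈ ({0, 1, 2} : Finset (Fin 3))}))
    ?_
  · rw [← key, card_triple q hq]
  · intro e he
    rw [Finset.mem_insert, Finset.mem_insert, Finset.mem_singleton] at he
    rw [mem_gadget_edge]
    rcases he with rfl | rfl | rfl
    · exact ⟨0, _, Or.inr (Or.inr ⟨rfl, t.2.1⟩), rfl⟩
    · exact ⟨1, _, Or.inl rfl, rfl⟩
    · exact ⟨2, _, Or.inr (Or.inl rfl), rfl⟩
  · intro e he f hf hef v hv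
    obtain ⟨⟨a, b, c⟩, hab, hac, hbc⟩ := t
    rw [Finset.mem_insert, Finset.mem_insert, Finset.mem_singleton] at he hf
    rcases he with rfl | rfl | rfl <;> rcases hf with rfl | rfl | rfl <;>
      simp_all [Sym2.mem_iff] <;> rcases hv with rfl | rfl <;> simp_all [eq_comm]
  · intro i
    fin_cases i <;> simp [Sym2.mem_iff]
  · constructor
    · rintro ⟨⟨a, b, c⟩, ht⟩ ⟨⟨a', b', c'⟩, ht'⟩ h
      have h := congrArg (fun x => x.1) h
      dsimp at h
      have key : ∀ (i : Fin 3) (j j' : Fin q), s(Sum.inl i, (Sum.inr j : Fin 3 ⊕ Fin q)) ∈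
          ({s(Sum.inl 0, Sum.inr a'), s(Sum.inl 1, Sum.inr b'), s(Sum.inl 2, Sum.inr c')} :
            Finset (Sym2 (Fin 3 ⊕ Fin q))) →
          ((i = 0 ∧ j = a') ∨ (i = 1 ∧ j = b') ∨ (i = 2 ∧ j = c')) := by
        intro i j j' hm
        rw [Finset.mem_insert, Finset.mem_insert, Finset.mem_singleton] at hm
        rcases hm with hm | hm | hm <;> rw [Sym2.eq_iff] at hm <;>
          rcases hm with ⟨h1, h2⟩ | ⟨h1, h2⟩ <;> simp_all
      have ha := key 0 a a (by rw [← h]; simp)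
      have hb := key 1 b b (by rw [← h]; simp)
      have hc := key 2 c c (by rw [← h]; simp)
      rcases ha with ⟨-, rfl⟩ | ⟨h1, -⟩ | ⟨h1, -⟩
      · rcases hb with ⟨h2, -⟩ | ⟨-, rfl⟩ | ⟨h2, -⟩
        · exact absurd h2 (by decide)
        · rcases hc with ⟨h3, -⟩ | ⟨h3, -⟩ | ⟨-, rfl⟩
          · exact absurd h3 (by decide)
          · exact absurd h3 (by decide)
          · rfl
        · exact absurd h2 (by decide)
      · exact absurd h1 (by decide)
      · exact absurd h1 (by decide)
    · rintro ⟨M, hM, hcov⟩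
      obtain ⟨a, hPa, haM⟩ := cover_edge hcov hM
        (show (0:Fin 3) ∈ ({0,1,2}:Finset (Fin 3)) by decide)
      obtain ⟨b, hPb, hbM⟩ := cover_edge hcov hM
        (show (1:Fin 3) ∈ ({0,1,2}:Finset (Fin 3)) by decide)
      obtain ⟨c, hPc, hcM⟩ := cover_edge hcov hM
        (show (2:Fin 3) ∈ ({0,1,2}:Finset (Fin 3)) by decide)
      have hha : (a : ℕ) < (q+1)/2 := by
        rcases hPa with h | h | h
        · exact absurd h (by decide)
        · exact absurd h (by decide)
        · exact h.2
      refine ⟨⟨⟨a, b, c⟩, hha, distinct_j hM (by decide) haM hbM,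
        distinct_j hM (by decide) haM hcM, distinct_j hM (by decide) hbM hcM⟩, ?_⟩
      ext1
      dsimp
      ext e
      simp only [Finset.mem_insert, Finset.mem_singleton]
      constructor
      · rintro (rfl | rfl | rfl)
        · exact haM
        · exact hbM
        · exact hcM
      · intro he
        obtain ⟨i, hi, j', hP', rfl⟩ := mem_M hcov hM he
        rw [Finset.mem_insert, Finset.mem_insert, Finset.mem_singleton] at hi
        rcases hi with rfl | rfl | rfl
        · left; rw [unique_j hM he haM]
        · right; left; rw [unique_j hM he hbM]
        · right; right; rw [unique_j hM he hcM]

/-- the exact values of `m_T` and their residues modulo `q`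
(`u₁, u₂, u₃` correspond to indices `0, 1, 2`). -/
theorem stmt_3 (q : ℕ) (hq : 3 ≤ q) (hodd : Odd q) :
    gadgetCount q ∅ = 1 ∧
    gadgetCount q {1} = q ∧
    gadgetCount q {2} = q ∧
    gadgetCount q {1, 2} = q * (q - 1) ∧
    gadgetCount q {0, 1, 2} = (q + 1) * (q - 1) * (q - 2) / 2 ∧
    gadgetCount q ∅ % q = 1 ∧
    gadgetCount q {0, 1, 2} % q = 1 ∧
    gadgetCount q {1} % q = 0 ∧
    gadgetCount q {2} % q = 0 ∧
    gadgetCount q {1, 2} % q = 0 := by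
  obtain ⟨m, rfl⟩ : ∃ m, q = 2 * m + 3 := by
    obtain ⟨k, hk⟩ := hodd
    exact ⟨k - 1, by omega⟩
  have h1 : gadgetCount (2 * m + 3) ∅ = 1 := count_empty _
  have h2 : gadgetCount (2 * m + 3) {1} = 2 * m + 3 := count_single _ (Or.inl rfl)
  have h3 : gadgetCount (2 * m + 3) {2} = 2 * m + 3 := count_single _ (Or.inr rfl)
  have h4 : gadgetCount (2 * m + 3) {1, 2} = (2 * m + 3) * (2 * m + 3 - 1) := by
    rw [count_pair, Nat.mul_sub_one]
  have h5 : gadgetCount (2 * m + 3) {0, 1, 2} = (m + 2) * ((2 * m + 2) * (2 * m + 1)) := by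
    rw [count_triple_match _ (by omega), show (2 * m + 3 + 1) / 2 = m + 2 by omega,
      show 2 * m + 3 - 1 = 2 * m + 2 by omega, show 2 * m + 3 - 2 = 2 * m + 1 by omega]
  have h5' : gadgetCount (2 * m + 3) {0, 1, 2} =
      (2 * m + 3 + 1) * (2 * m + 3 - 1) * (2 * m + 3 - 2) / 2 := by
    rw [h5, show 2 * m + 3 + 1 = 2 * m + 4 by omega, show 2 * m + 3 - 1 = 2 * m + 2 by omega,
      show 2 * m + 3 - 2 = 2 * m + 1 by omega,
      show (2 * m + 4) * (2 * m + 2) * (2 * m + 1) =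
        2 * ((m + 2) * ((2 * m + 2) * (2 * m + 1))) by ring,
      Nat.mul_div_cancel_left _ (by norm_num : (0:ℕ) < 2)]
  refine ⟨h1, h2, h3, h4, h5', ?_, ?_, ?_, ?_, ?_⟩
  · rw [h1, Nat.mod_eq_of_lt (by omega)]
  · rw [h5, show (m + 2) * ((2 * m + 2) * (2 * m + 1)) =
      (2 * m + 3) * (2 * m ^ 2 + 4 * m + 1) + 1 by ring,
      Nat.mul_add_mod, Nat.mod_eq_of_lt (by omega)]
  · rw [h2, Nat.mod_self]
  · rw [h3, Nat.mod_self]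
  · rw [h4, Nat.mul_mod_right]
end

section
/- For every integer q ≥ 3 there exist a finite simple graph A and two distinct vertices u and v of A such that the number of edges of A, the number of edges of A − u, and the number of edges of A − v are each divisible by q, while A − {u, v} has exactly one edge. -/
/-!
Deleting a vertex `w` removes `deg w` edges, and deleting two adjacent vertices `u, v` removes
`deg u + deg v - 1` edges. On `q + 1` vertices, join `u` and `v` to every other vertex and add one
edge `xy` avoiding them, which needs `q ≥ 3`. Then `deg u = deg v = q` and `A - {u, v}` is the
single edge `xy`, so `A` has `2q` edges while `A - u` and `A - v` have `q` each.
-/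
open Finset

namespace SimpleGraph

variable {V : Type*}

section Counting

variable [Fintype V] [DecidableEq V] (G : SimpleGraph V) [DecidableRel G.Adj]

theorem card_edgeSet_induce_ne (x : V) :
    Nat.card (G.induce {y | y ≠ x}).edgeSet = Nat.card G.edgeSet - G.degree x := by
  rw [Nat.card_eq_fintype_card, Nat.card_eq_fintype_card, ← edgeFinset_card, ← edgeFinset_card]
  exact (G.card_edgeFinset_induce_compl_singleton x).trans (G.card_edgeFinset_deleteIncidenceSet x)

theorem incidenceFinset_inter_incidenceFinset_of_adj {u v : V} (huv : G.Adj u v) :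
    G.incidenceFinset u ∩ G.incidenceFinset v = {s(u, v)} := by
  apply coe_injective
  push_cast
  exact G.incidenceSet_inter_incidenceSet_of_adj huv

theorem card_edgeSet_induce_ne_ne_add_degree_add_degree {u v : V} (huv : G.Adj u v) :
    Nat.card (G.induce {x | x ≠ u ∧ x ≠ v}).edgeSet + G.degree u + G.degree v
      = Nat.card G.edgeSet + 1 := by
  set I := G.incidenceFinset u ∪ G.incidenceFinset v
  have hinduce : Nat.card (G.induce {x | x ≠ u ∧ x ≠ v}).edgeSet = #(G.edgeFinset \ I) := by
    rw [Nat.card_eq_fintype_card, ← edgeFinset_card, ← card_map, map_edgeFinset_induce]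
    congr 1
    ext e
    induction e using Sym2.ind with
    | _ a b => grind [mem_incidenceFinset, incidenceSet, mem_edgeFinset]
  have hI : #I + 1 = G.degree u + G.degree v := by
    rw [← card_incidenceFinset_eq_degree, ← card_incidenceFinset_eq_degree,
      ← card_union_add_card_inter, G.incidenceFinset_inter_incidenceFinset_of_adj huv,
      card_singleton]
  have hIE : I ⊆ G.edgeFinset :=
    union_subset (G.incidenceFinset_subset u) (G.incidenceFinset_subset v)
  rw [hinduce, card_sdiff_of_subset hIE, Nat.card_eq_fintype_card, ← edgeFinset_card]
  have := card_le_card hIE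
  omega

end Counting

def withUniversalPair (u v : V) (H : SimpleGraph V) : SimpleGraph V :=
  fromRel (fun a _ => a = u ∨ a = v) ⊔ H

section withUniversalPair

variable {u v : V} {H : SimpleGraph V}

theorem isUniversal_withUniversalPair_left : (withUniversalPair u v H).IsUniversal u :=
  fun _ hw => Or.inl ((fromRel_adj _ _ _).2 ⟨hw, Or.inl (Or.inl rfl)⟩)

theorem isUniversal_withUniversalPair_right : (withUniversalPair u v H).IsUniversal v :=
  fun _ hw => Or.inl ((fromRel_adj _ _ _).2 ⟨hw, Or.inl (Or.inr rfl)⟩)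

theorem induce_withUniversalPair :
    (withUniversalPair u v H).induce {x | x ≠ u ∧ x ≠ v} =
      H.induce {x | x ≠ u ∧ x ≠ v} := by
  ext ⟨a, ha⟩ ⟨b, hb⟩
  simp only [withUniversalPair, comap_adj, Function.Embedding.coe_subtype, sup_adj, fromRel_adj,
    or_iff_right_iff_imp]
  grind

end withUniversalPair

theorem induce_edge {x y : V} {s : Set V} (hx : x ∈ s) (hy : y ∈ s) :
    (edge x y).induce s = edge ⟨x, hx⟩ ⟨y, hy⟩ := by
  ext a b
  simp [edge_adj, ← Subtype.val_inj]

end SimpleGraph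

open SimpleGraph

/-- For every integer `q ≥ 3` there is a finite simple graph `A` with two
distinct vertices `u, v` such that the numbers of edges of `A`, `A − u` and `A − v` are
divisible by `q`, while `A − {u,v}` has exactly one edge. -/
theorem stmt_4 (q : ℕ) (hq : 3 ≤ q) :
    ∃ (V : Type) (_ : Fintype V) (A : SimpleGraph V) (u v : V), u ≠ v ∧
      q ∣ Nat.card A.edgeSet ∧
      q ∣ Nat.card (A.induce {x : V | x ≠ u}).edgeSet ∧
      q ∣ Nat.card (A.induce {x : V | x ≠ v}).edgeSet ∧
      Nat.card (A.induce {x : V | x ≠ u ∧ x ≠ v}).edgeSet = 1 := by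
  classical
  let u : Fin (q + 1) := ⟨0, by omega⟩
  let v : Fin (q + 1) := ⟨1, by omega⟩
  let x : Fin (q + 1) := ⟨2, by omega⟩
  let y : Fin (q + 1) := ⟨3, by omega⟩
  have hx : x ∈ {z | z ≠ u ∧ z ≠ v} := by constructor <;> simp [x, u, v, Fin.ext_iff]
  have hy : y ∈ {z | z ≠ u ∧ z ≠ v} := by constructor <;> simp [y, u, v, Fin.ext_iff]
  have hxy : x ≠ y := by simp [x, y, Fin.ext_iff]
  let A := withUniversalPair u v (edge x y)
  have huv : A.Adj u v := isUniversal_withUniversalPair_left (by simp [u, v, Fin.ext_iff])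
  have hdeg : ∀ a, A.IsUniversal a → A.degree a = q := fun a ha => by
    rw [(A.degree_eq_card_sub_one a).2 ha, Fintype.card_fin, Nat.add_sub_cancel]
  have hdeg_u := hdeg u isUniversal_withUniversalPair_left
  have hdeg_v := hdeg v isUniversal_withUniversalPair_right
  have hrest : Nat.card (A.induce {z | z ≠ u ∧ z ≠ v}).edgeSet = 1 := by
    rw [induce_withUniversalPair, induce_edge hx hy,
      edgeSet_edge_of_ne (Subtype.coe_ne_coe.1 hxy), Nat.card_unique]
  have hcount := A.card_edgeSet_induce_ne_ne_add_degree_add_degree huv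
  refine ⟨Fin (q + 1), inferInstance, A, u, v, huv.ne, ⟨2, by omega⟩, ?_, ?_, hrest⟩
  · rw [card_edgeSet_induce_ne]
    exact ⟨1, by omega⟩
  · rw [card_edgeSet_induce_ne]
    exact ⟨1, by omega⟩
end

section
/- For every odd integer n ≥ 3 there exist a finite simple graph Γ and n pairwise distinct distinguished vertices x₁, …, x_n of Γ such that for every subset S ⊆ {x₁, …, x_n}, the number of perfect matchings of the induced subgraph Γ − S equals 1 if |S| is odd and equals 0 if |S| is even. -/
open Finset Function

variable {V W : Type*}

namespace IsMatchingIn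

variable {G : SimpleGraph V} {M : Finset (Sym2 V)}

lemma mono (hM : IsMatchingIn G M) {N : Finset (Sym2 V)} (hNM : N ⊆ M) : IsMatchingIn G N :=
  ⟨fun e he => hM.1 e (hNM he), fun e he f hf => hM.2 e (hNM he) f (hNM hf)⟩

lemma eq_of_mem_of_mem (hM : IsMatchingIn G M) {e f : Sym2 V} (he : e ∈ M) (hf : f ∈ M)
    {v : V} (hve : v ∈ e) (hvf : v ∈ f) : e = f := by
  by_contra hne
  exact hM.2 e he f hf hne v hve hvf

end IsMatchingIn

namespace SimpleGraph

/-- Perfect matchings of `G.induce A`, recorded as sets of edges of `G` itself. -/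
def IsPerfectMatchingOn (G : SimpleGraph V) (A : Set V) (M : Finset (Sym2 V)) : Prop :=
  IsMatchingIn G M ∧ ∀ v, v ∈ A ↔ ∃ e ∈ M, v ∈ e

noncomputable def numPerfectMatchingsOn (G : SimpleGraph V) (A : Set V) : ℕ :=
  Nat.card {M // G.IsPerfectMatchingOn A M}

namespace IsPerfectMatchingOn

variable {G : SimpleGraph V} {A : Set V} {M : Finset (Sym2 V)}

lemma mem_of_mem (hM : G.IsPerfectMatchingOn A M) {e : Sym2 V} (he : e ∈ M) {v : V}
    (hv : v ∈ e) : v ∈ A :=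
  (hM.2 v).2 ⟨e, he, hv⟩

lemma exists_adj (hM : G.IsPerfectMatchingOn A M) {v : V} (hv : v ∈ A) :
    ∃ w ∈ A, G.Adj v w ∧ s(v, w) ∈ M := by
  obtain ⟨e, he, hve⟩ := (hM.2 v).1 hv
  obtain ⟨w, rfl⟩ := Sym2.mem_iff_exists.mp hve
  exact ⟨w, hM.mem_of_mem he (Sym2.mem_mk_right v w), hM.1.1 _ he, he⟩

lemma eq_of_mem_of_mem (hM : G.IsPerfectMatchingOn A M) {v w w' : V} (h : s(v, w) ∈ M)
    (h' : s(v, w') ∈ M) : w = w' :=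
  Sym2.congr_right.mp (hM.1.eq_of_mem_of_mem h h' (Sym2.mem_mk_left v w) (Sym2.mem_mk_left v w'))

lemma mem_of_forall_adj_eq (hM : G.IsPerfectMatchingOn A M) {u v : V} (hv : v ∈ A)
    (hu : ∀ w ∈ A, G.Adj v w → w = u) : s(v, u) ∈ M := by
  obtain ⟨w, hwA, hvw, hvwM⟩ := hM.exists_adj hv
  rwa [← hu w hwA hvw]

lemma mem_of_forall_adj_mem_pair (hM : G.IsPerfectMatchingOn A M) {u v w : V} (hu : u ∈ A)
    (hv : v ∈ A) (huv : u ≠ v) (hu' : ∀ z ∈ A, G.Adj u z → z = v ∨ z = w)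
    (hv' : ∀ z ∈ A, G.Adj v z → z = u ∨ z = w) : s(u, v) ∈ M := by
  obtain ⟨z, hzA, huz, huzM⟩ := hM.exists_adj hu
  rcases hu' z hzA huz with rfl | rfl
  · exact huzM
  obtain ⟨z', hz'A, hvz', hvz'M⟩ := hM.exists_adj hv
  rcases hv' z' hz'A hvz' with rfl | rfl
  · rwa [Sym2.eq_swap]
  · rw [Sym2.eq_swap] at huzM hvz'M
    exact absurd (hM.eq_of_mem_of_mem hvz'M huzM) huv.symm

variable [DecidableEq V]

lemma erase (hM : G.IsPerfectMatchingOn A M) {u v : V} (huv : s(u, v) ∈ M) :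
    G.IsPerfectMatchingOn (A \ {u, v}) (M.erase s(u, v)) := by
  refine ⟨hM.1.mono (erase_subset _ _), fun w => ?_⟩
  simp only [Set.mem_sdiff, Set.mem_insert_iff, Set.mem_singleton_iff, mem_erase]
  constructor
  · rintro ⟨hwA, hw⟩
    obtain ⟨e, he, hwe⟩ := (hM.2 w).1 hwA
    refine ⟨e, ⟨?_, he⟩, hwe⟩
    rintro rfl
    exact hw (Sym2.mem_iff.mp hwe)
  · rintro ⟨e, ⟨hne, he⟩, hwe⟩
    refine ⟨hM.mem_of_mem he hwe, fun hw => hne ?_⟩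
    exact hM.1.eq_of_mem_of_mem he huv hwe (Sym2.mem_iff.mpr hw)

lemma insert {u v : V} (hN : G.IsPerfectMatchingOn (A \ {u, v}) M) (hu : u ∈ A) (hv : v ∈ A)
    (huv : G.Adj u v) : G.IsPerfectMatchingOn A (insert s(u, v) M) := by
  have hfresh : ∀ e ∈ M, ∀ w ∈ e, w ∉ s(u, v) := fun e he w hw => by
    simpa [Sym2.mem_iff] using (hN.mem_of_mem he hw).2
  refine ⟨⟨?_, ?_⟩, fun w => ?_⟩
  · simpa [forall_mem_insert] using ⟨huv, hN.1.1⟩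
  · simp only [mem_insert]
    rintro e (rfl | he) f (rfl | hf) hef w hwe hwf
    · exact hef rfl
    · exact hfresh f hf w hwf hwe
    · exact hfresh e he w hwe hwf
    · exact hN.1.2 e he f hf hef w hwe hwf
  · rw [exists_mem_insert, ← hN.2 w, Sym2.mem_iff]
    simp only [Set.mem_sdiff, Set.mem_insert_iff, Set.mem_singleton_iff]
    grind

end IsPerfectMatchingOn

variable {G : SimpleGraph V} {A : Set V}

theorem numPerfectMatchingsOn_eq_sdiff_of_forall_mem {u v : V} (hu : u ∈ A) (hv : v ∈ A)
    (huv : G.Adj u v) (hforced : ∀ M, G.IsPerfectMatchingOn A M → s(u, v) ∈ M) :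
    G.numPerfectMatchingsOn A = G.numPerfectMatchingsOn (A \ {u, v}) := by
  classical
  exact Nat.card_congr
    { toFun := fun M => ⟨M.1.erase s(u, v), M.2.erase (hforced _ M.2)⟩
      invFun := fun N => ⟨insert s(u, v) N.1, N.2.insert hu hv huv⟩
      left_inv := fun M => Subtype.ext (insert_erase (hforced _ M.2))
      right_inv := fun N => Subtype.ext <| erase_insert fun h =>
        (N.2.mem_of_mem h (Sym2.mem_mk_left u v)).2 (Set.mem_insert u _) }

namespace Embedding

variable {H : SimpleGraph W} (f : G ↪g H)

lemma isPerfectMatchingOn_image_iff [DecidableEq W] {M : Finset (Sym2 V)} :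
    H.IsPerfectMatchingOn (f '' A) (M.image (Sym2.map f)) ↔ G.IsPerfectMatchingOn A M := by
  simp only [IsPerfectMatchingOn, IsMatchingIn, forall_mem_image, exists_mem_image,
    f.map_mem_edgeSet_iff, (Sym2.map.injective f.injective).ne_iff]
  have hdisj (e e' : Sym2 V) :
      (∀ w ∈ Sym2.map f e, w ∉ Sym2.map f e') ↔ ∀ v ∈ e, v ∉ e' := by
    simp only [Sym2.mem_map, forall_exists_index, and_imp, forall_apply_eq_imp_iff₂,
      f.injective.eq_iff, exists_eq_right]
  simp only [hdisj]
  refine and_congr Iff.rfl ⟨fun h v => ?_, fun h w => ?_⟩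
  · simpa [f.injective.mem_set_image, Sym2.mem_map, f.injective.eq_iff] using h (f v)
  · by_cases hw : w ∈ Set.range f
    · obtain ⟨v, rfl⟩ := hw
      simpa [f.injective.mem_set_image, Sym2.mem_map, f.injective.eq_iff] using h v
    · refine iff_of_false (fun ⟨v, _, hv⟩ => hw ⟨v, hv⟩) fun ⟨e, _, hwe⟩ => hw ?_
      obtain ⟨v, -, rfl⟩ := Sym2.mem_map.mp hwe
      exact ⟨v, rfl⟩

variable (A) in
theorem numPerfectMatchingsOn_image :
    H.numPerfectMatchingsOn (f '' A) = G.numPerfectMatchingsOn A := by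
  classical
  refine (Nat.card_eq_of_bijective
    (fun M => ⟨M.1.image (Sym2.map f), f.isPerfectMatchingOn_image_iff.2 M.2⟩) ⟨?_, ?_⟩).symm
  · exact fun M M' h => Subtype.ext <|
      image_injective (Sym2.map.injective f.injective) (congrArg Subtype.val h)
  · rintro ⟨N, hN⟩
    have hrange : ↑N ⊆ Sym2.map f '' Set.univ := by
      intro e he
      induction e using Sym2.ind with
      | _ a b =>
        obtain ⟨a', -, rfl⟩ := hN.mem_of_mem he (Sym2.mem_mk_left a b)
        obtain ⟨b', -, rfl⟩ := hN.mem_of_mem he (Sym2.mem_mk_right _ b)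
        exact ⟨s(a', b'), trivial, rfl⟩
    obtain ⟨M, -, rfl⟩ := subset_set_image_iff.mp hrange
    exact ⟨⟨M, f.isPerfectMatchingOn_image_iff.1 hN⟩, rfl⟩

end Embedding

theorem numPerfectMatchingsOn_eq_card_induce :
    G.numPerfectMatchingsOn A = Nat.card {M : Finset (Sym2 A) //
      IsMatchingIn (G.induce A) M ∧ ∀ w : A, ∃ e ∈ M, w ∈ e} := by
  have hA : ⇑(Embedding.induce (G := G) A) '' Set.univ = A :=
    Set.image_univ.trans Subtype.range_coe
  calc G.numPerfectMatchingsOn A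
      = (G.induce A).numPerfectMatchingsOn Set.univ := by
        rw [← (Embedding.induce A).numPerfectMatchingsOn_image, hA]
    _ = _ := Nat.card_congr (Equiv.subtypeEquivRight fun M => by simp [IsPerfectMatchingOn])

theorem numPerfectMatchingsOn_empty : G.numPerfectMatchingsOn ∅ = 1 := by
  have hempty : ∀ M : {M // G.IsPerfectMatchingOn ∅ M}, M.1 = ∅ := fun ⟨M, hM⟩ =>
    eq_empty_of_forall_notMem fun e he => hM.mem_of_mem he (Sym2.out_fst_mem e)
  have : Unique {M // G.IsPerfectMatchingOn ∅ M} :=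
    { default := ⟨∅, by simp [IsPerfectMatchingOn, IsMatchingIn]⟩
      uniq := fun M => Subtype.ext (hempty M) }
  exact Nat.card_unique

theorem numPerfectMatchingsOn_bot (hA : A.Nonempty) :
    (⊥ : SimpleGraph V).numPerfectMatchingsOn A = 0 := by
  have : IsEmpty {M // (⊥ : SimpleGraph V).IsPerfectMatchingOn A M} := ⟨fun ⟨M, hM⟩ => by
    obtain ⟨w, -, hadj, -⟩ := hM.exists_adj hA.some_mem
    exact hadj⟩
  exact Nat.card_of_isEmpty

open Sum

def attachTriangle (G : SimpleGraph V) (h : V) : SimpleGraph (V ⊕ Fin 2) where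
  Adj
    | inl a, inl b => G.Adj a b
    | inl a, inr _ => a = h
    | inr _, inl a => a = h
    | inr i, inr j => i ≠ j
  symm := ⟨by rintro (a | i) (b | j) hab <;> first | exact hab.symm | exact hab⟩
  loopless := ⟨by rintro (a | i) hadj; exacts [G.loopless.irrefl a hadj, hadj rfl]⟩

def Embedding.attachTriangle (G : SimpleGraph V) (h : V) : G ↪g G.attachTriangle h :=
  ⟨Embedding.inl, Iff.rfl⟩

section attachTriangle

variable (G) {h : V}

@[simp] lemma attachTriangle_adj_inr_inl {a : V} {i : Fin 2} :
    (G.attachTriangle h).Adj (inr i) (inl a) ↔ a = h := Iff.rfl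

@[simp] lemma attachTriangle_adj_inr_inr {i j : Fin 2} :
    (G.attachTriangle h).Adj (inr i) (inr j) ↔ i ≠ j := Iff.rfl

lemma numPerfectMatchingsOn_attachTriangle_image_inl (B : Set V) :
    (G.attachTriangle h).numPerfectMatchingsOn (inl '' B) = G.numPerfectMatchingsOn B :=
  (Embedding.attachTriangle G h).numPerfectMatchingsOn_image B

lemma numPerfectMatchingsOn_attachTriangle_insert_insert (B : Set V) :
    (G.attachTriangle h).numPerfectMatchingsOn (insert (inr 0) (insert (inr 1) (inl '' B))) =
      G.numPerfectMatchingsOn B := by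
  have hdiff : insert (inr 0) (insert (inr 1) (inl '' B)) \ {inr 0, inr 1} =
      (inl '' B : Set (V ⊕ Fin 2)) := by
    ext (a | i) <;> simp
  rw [numPerfectMatchingsOn_eq_sdiff_of_forall_mem (u := inr 0) (v := inr 1) (by simp) (by simp)
    (by simp), hdiff, numPerfectMatchingsOn_attachTriangle_image_inl]
  intro M hM
  refine hM.mem_of_forall_adj_mem_pair (w := inl h) (by simp) (by simp) (by simp) ?_ ?_ <;>
    rintro (a | i) - hadj <;> simp_all <;> omega

lemma numPerfectMatchingsOn_attachTriangle_insert {B : Set V} (hB : h ∈ B) (j : Fin 2) :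
    (G.attachTriangle h).numPerfectMatchingsOn (insert (inr j) (inl '' B)) =
      G.numPerfectMatchingsOn (B \ {h}) := by
  have hdiff : insert (inr j) (inl '' B) \ {inr j, inl h} =
      (inl '' (B \ {h}) : Set (V ⊕ Fin 2)) := by
    ext (a | i) <;> simp
  rw [numPerfectMatchingsOn_eq_sdiff_of_forall_mem (u := inr j) (v := inl h) (by simp)
    (by simp [hB]) (by simp), hdiff, numPerfectMatchingsOn_attachTriangle_image_inl]
  intro M hM
  refine hM.mem_of_forall_adj_eq (by simp) ?_
  rintro (a | i) hw hadj <;> simp_all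

end attachTriangle

def IsParityGadget (G : SimpleGraph V) (X : Finset V) : Prop :=
  ∀ S ⊆ X, G.numPerfectMatchingsOn (↑S)ᶜ = if Odd S.card then 1 else 0

lemma isParityGadget_bot_empty [Nonempty V] : (⊥ : SimpleGraph V).IsParityGadget ∅ := by
  intro S hS
  rw [subset_empty.mp hS]
  simpa using numPerfectMatchingsOn_bot Set.univ_nonempty

lemma isParityGadget_bot_univ [Unique V] : (⊥ : SimpleGraph V).IsParityGadget univ := by
  intro S _
  obtain rfl | ⟨v, hv⟩ := S.eq_empty_or_nonempty
  · simpa using numPerfectMatchingsOn_bot Set.univ_nonempty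
  · rw [show S = univ from eq_univ_iff_forall.mpr fun w => Subsingleton.elim v w ▸ hv,
      coe_univ, Set.compl_univ, numPerfectMatchingsOn_empty]
    simp

theorem IsParityGadget.attachTriangle [DecidableEq V] {X : Finset V} (hG : G.IsParityGadget X)
    {h : V} (hh : h ∈ X) : (G.attachTriangle h).IsParityGadget ((X.erase h).disjSum univ) := by
  intro S hS
  set L := S.toLeft
  have hLX : L ⊆ X.erase h := (subset_disjSum.mp hS).1
  have hLsub : L ⊆ X := hLX.trans (erase_subset h X)
  have hhL : h ∉ L := fun hmem => by simpa using hLX hmem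
  have hcompl_insert : (↑L : Set V)ᶜ \ {h} = (↑(insert h L))ᶜ := by
    ext
    simp [and_comm]
  rw [← card_toLeft_add_card_toRight]
  rcases (by decide : ∀ R : Finset (Fin 2), R = ∅ ∨ R = univ ∨ ∃ j, R = {j}ᶜ) S.toRight
    with hR | hR | ⟨j, hR⟩
  · have hA : (↑S : Set (V ⊕ Fin 2))ᶜ =
        insert (inr 0) (insert (inr 1) (inl '' (↑L : Set V)ᶜ)) := by
      ext (a | i) <;> simp [L, ← mem_toRight, hR]
      omega
    rw [hA, numPerfectMatchingsOn_attachTriangle_insert_insert, hG L hLsub, hR]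
    simp [L]
  · have hA : (↑S : Set (V ⊕ Fin 2))ᶜ = inl '' (↑L : Set V)ᶜ := by
      ext (a | i) <;> simp [L, ← mem_toRight, hR]
    rw [hA, numPerfectMatchingsOn_attachTriangle_image_inl, hG L hLsub, hR]
    simp [L, Nat.odd_add]
  · have hA : (↑S : Set (V ⊕ Fin 2))ᶜ = insert (inr j) (inl '' (↑L : Set V)ᶜ) := by
      ext (a | i) <;> simp [L, ← mem_toRight, hR]
    rw [hA, numPerfectMatchingsOn_attachTriangle_insert _ (by simpa), hcompl_insert,
      hG _ (insert_subset hh hLsub), card_insert_of_notMem hhL, hR]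
    simp [L, card_compl]

theorem exists_isParityGadget : ∀ n : ℕ, ∃ (V : Type) (_ : Fintype V) (G : SimpleGraph V)
    (X : Finset V), X.card = n ∧ G.IsParityGadget X
  | 0 => ⟨Unit, inferInstance, ⊥, ∅, rfl, isParityGadget_bot_empty⟩
  | 1 => ⟨Unit, inferInstance, ⊥, univ, rfl, isParityGadget_bot_univ⟩
  | n + 2 => by
    classical
    obtain ⟨V, _, G, X, hX, hG⟩ := exists_isParityGadget (n + 1)
    obtain ⟨h, hh⟩ := card_pos.mp (by omega : 0 < X.card)
    exact ⟨V ⊕ Fin 2, inferInstance, G.attachTriangle h, (X.erase h).disjSum univ,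
      by simp [card_erase_of_mem hh, hX], hG.attachTriangle hh⟩

end SimpleGraph

theorem stmt_5_general (n : ℕ) :
    ∃ (V : Type) (_ : Fintype V) (Γ : SimpleGraph V) (x : Fin n ↪ V),
      ∀ T : Finset (Fin n),
        Nat.card {M : Finset (Sym2 ↥{v : V | v ∉ ⇑x '' ↑T}) //
          IsMatchingIn (Γ.induce {v : V | v ∉ ⇑x '' ↑T}) M ∧
          ∀ w : ↥{v : V | v ∉ ⇑x '' ↑T}, ∃ e ∈ M, w ∈ e} =
        if Odd T.card then 1 else 0 := by
  obtain ⟨V, _, Γ, X, hX, hΓ⟩ := SimpleGraph.exists_isParityGadget n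
  let x : Fin n ↪ V := (X.equivFinOfCardEq hX).symm.toEmbedding.trans (Embedding.subtype _)
  refine ⟨V, inferInstance, Γ, x, fun T => ?_⟩
  have hTX : T.map x ⊆ X := fun v hv => by
    obtain ⟨i, -, rfl⟩ := mem_map.mp hv
    exact ((X.equivFinOfCardEq hX).symm i).2
  have hcount := hΓ _ hTX
  rw [coe_map, card_map] at hcount
  rw [← SimpleGraph.numPerfectMatchingsOn_eq_card_induce]
  exact hcount

/-- for every odd `n ≥ 3` there are a finite graph `Γ` and `n` distinct
distinguished vertices `x 0, …, x (n-1)` such that for every subset `S` of the distinguished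
vertices (given by `T : Finset (Fin n)`), the number of perfect matchings of `Γ − S` is `1`
if `|S|` is odd and `0` if `|S|` is even. -/
theorem stmt_5 (n : ℕ) (hn : 3 ≤ n) (hodd : Odd n) :
    ∃ (V : Type) (_ : Fintype V) (Γ : SimpleGraph V) (x : Fin n ↪ V),
      ∀ T : Finset (Fin n),
        Nat.card {M : Finset (Sym2 ↥{v : V | v ∉ ⇑x '' ↑T}) //
          IsMatchingIn (Γ.induce {v : V | v ∉ ⇑x '' ↑T}) M ∧
          ∀ w : ↥{v : V | v ∉ ⇑x '' ↑T}, ∃ e ∈ M, w ∈ e} =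
        if Odd T.card then 1 else 0 :=
  stmt_5_general n
end

section
/- Let R be a commutative ring, let r ≥ 1 and m ≥ 1 be integers, and let A be a symmetric 2m × 2m matrix over R[X₁, …, X_r] with zero diagonal whose entries are polynomials of total degree at most 1. Set D = m + 1 and let κ : R[X₁, …, X_r] → R[X] be the R-algebra homomorphism with κ(X_i) = X^{D^{i−1}}. Then applying κ entrywise commutes with the Hafnian, i.e., κ(haf A) = haf(κ(A)); moreover every variable appears in haf A with individual degree at most m, and consequently haf A is the unique polynomial in R[X₁, …, X_r] with all individual degrees strictly less than D whose image under κ equals haf(κ(A)). -/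
lemma aux_dm (D a b : ℕ) (hD : 0 < D) (hb : b < D) : (a * D + b) % D = b ∧ (a * D + b) / D = a := by
  constructor
  · rw [add_comm, Nat.add_mul_mod_self_right, Nat.mod_eq_of_lt hb]
  · rw [add_comm, Nat.add_mul_div_right _ _ hD, Nat.div_eq_of_lt hb, zero_add]

lemma aux_base_inj (D : ℕ) (hD : 0 < D) :
    ∀ (n : ℕ) (s t : ℕ → ℕ), (∀ j, s j < D) → (∀ j, t j < D) →
      ∑ j ∈ Finset.range n, s j * D ^ j = ∑ j ∈ Finset.range n, t j * D ^ j →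
      ∀ j, j < n → s j = t j := by
  intro n
  induction n with
  | zero => intro s t _ _ _ j hj; omega
  | succ n ih =>
    intro s t hs ht hsum j hj
    rw [Finset.sum_range_succ' (fun j => s j * D ^ j), Finset.sum_range_succ' (fun j => t j * D ^ j)] at hsum
    simp only [pow_succ, ← mul_assoc, ← Finset.sum_mul, pow_zero, mul_one] at hsum
    obtain ⟨hs0, hs1⟩ := aux_dm D _ _ hD (hs 0)
    obtain ⟨ht0, ht1⟩ := aux_dm D _ _ hD (ht 0)
    have h0 : s 0 = t 0 := by rw [← hs0, ← ht0, hsum]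
    rcases Nat.eq_zero_or_pos j with rfl | hjpos
    · exact h0
    · have hdiv : ∑ j ∈ Finset.range n, s (j+1) * D ^ j = ∑ j ∈ Finset.range n, t (j+1) * D ^ j := by
        rw [← hs1, ← ht1, hsum]
      obtain ⟨k, rfl⟩ := Nat.exists_eq_succ_of_ne_zero (Nat.pos_iff_ne_zero.mp hjpos)
      exact ih (fun j => s (j+1)) (fun j => t (j+1)) (fun j => hs _) (fun j => ht _) hdiv k (by omega)



open Classical in
/-- The Hafnian of an `n × n` matrix over a commutative ring: the sum over all partitions `M`
of `{0, …, n-1}` into two-element sets of the product of the corresponding entries. -/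
noncomputable def hafnian {n : ℕ} {R : Type*} [CommRing R]
    (A : Matrix (Fin n) (Fin n) R) : R :=
  ∑ M ∈ Finset.univ.filter (fun M : Finset (Sym2 (Fin n)) =>
      (∀ e ∈ M, ¬ e.IsDiag) ∧
      (∀ e ∈ M, ∀ f ∈ M, e ≠ f → ∀ v ∈ e, v ∉ f) ∧
      ∀ v : Fin n, ∃ e ∈ M, v ∈ e),
    ∏ e ∈ M, Sym2.lift ⟨fun i j => A (min i j) (max i j),
      fun i j => by dsimp only; rw [inf_comm i j, sup_comm i j]⟩ e

/-- for a symmetric `2m × 2m` matrix `A` with zero diagonal whose entries are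
polynomials of total degree at most 1, Kronecker substitution `κ` with `κ(X_i) = X^(D^(i-1))`
(zero-indexed: `κ (X i) = X ^ ((m+1)^i)`, `D = m + 1`) commutes with the Hafnian; every
variable appears in `haf A` with individual degree at most `m`; and `haf A` is the unique
polynomial with all individual degrees `< D` mapping to `haf (κ(A))` under `κ`. -/
theorem stmt_9 {R : Type} [CommRing R] (r m : ℕ) (hr : 1 ≤ r) (hm : 1 ≤ m)
    (A : Matrix (Fin (2 * m)) (Fin (2 * m)) (MvPolynomial (Fin r) R))
    (hsymm : A.IsSymm) (hdiag : ∀ i, A i i = 0)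
    (hdeg : ∀ i j, (A i j).totalDegree ≤ 1)
    (κ : MvPolynomial (Fin r) R →ₐ[R] Polynomial R)
    (hκ : ∀ i : Fin r, κ (MvPolynomial.X i) = Polynomial.X ^ ((m + 1) ^ (i : ℕ))) :
    κ (hafnian A) = hafnian (A.map ⇑κ) ∧
    (∀ i : Fin r, (hafnian A).degreeOf i ≤ m) ∧
    ∀ p : MvPolynomial (Fin r) R, (∀ i, p.degreeOf i < m + 1) →
      κ p = hafnian (A.map ⇑κ) → p = hafnian A := by
  classical
  set D := m + 1 with hDdef
  have hD : 0 < D := Nat.succ_pos m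
  -- Part 1
  have h1 : κ (hafnian A) = hafnian (A.map ⇑κ) := by
    unfold hafnian
    rw [map_sum]
    refine Finset.sum_congr rfl fun M _ => ?_
    rw [map_prod]
    refine Finset.prod_congr rfl fun e _ => ?_
    induction e using Sym2.ind with
    | _ i j => simp [Matrix.map_apply]
  -- cardinality of matchings
  have hcard : ∀ M : Finset (Sym2 (Fin (2 * m))),
      (∀ e ∈ M, ¬ e.IsDiag) → (∀ e ∈ M, ∀ f ∈ M, e ≠ f → ∀ v ∈ e, v ∉ f) →
      M.card ≤ m := by
    intro M hnd hdisj
    set S : Sym2 (Fin (2 * m)) → Finset (Fin (2 * m)) :=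
      fun e => Finset.univ.filter (· ∈ e) with hS
    have hScard : ∀ e ∈ M, (S e).card = 2 := by
      intro e he
      induction e using Sym2.ind with
      | _ i j =>
        have hij : i ≠ j := by
          intro h; exact hnd _ he (by rw [h]; exact Sym2.mk_isDiag_iff.mpr rfl)
        have : S s(i, j) = {i, j} := by
          ext v; simp [hS, Sym2.mem_iff]
        rw [this, Finset.card_pair hij]
    have hdisjS : ∀ e ∈ M, ∀ f ∈ M, e ≠ f → Disjoint (S e) (S f) := by
      intro e he f hf hef
      rw [Finset.disjoint_left]
      intro v hv hv'
      simp only [hS, Finset.mem_filter] at hv hv'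
      exact hdisj e he f hf hef v hv.2 hv'.2
    have h2 : (M.biUnion S).card = ∑ e ∈ M, (S e).card := Finset.card_biUnion hdisjS
    have h3 : ∑ e ∈ M, (S e).card = 2 * M.card := by
      rw [Finset.sum_congr rfl hScard, Finset.sum_const, smul_eq_mul, mul_comm]
    have h4 : (M.biUnion S).card ≤ 2 * m := by
      simpa using Finset.card_le_card (Finset.subset_univ (M.biUnion S))
    omega
  -- Part 2
  have h2 : ∀ i : Fin r, (hafnian A).degreeOf i ≤ m := by
    intro i
    refine le_trans (MvPolynomial.degreeOf_le_totalDegree _ i) ?_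
    unfold hafnian
    refine le_trans (MvPolynomial.totalDegree_finset_sum _ _) (Finset.sup_le fun M hM => ?_)
    rw [Finset.mem_filter] at hM
    obtain ⟨-, hnd, hdisj, -⟩ := hM
    refine le_trans (MvPolynomial.totalDegree_finset_prod _ _) ?_
    have hterm : ∀ e ∈ M, (Sym2.lift ⟨fun i j => A (min i j) (max i j),
        fun i j => by dsimp only; rw [inf_comm i j, sup_comm i j]⟩ e).totalDegree ≤ 1 := by
      intro e _
      induction e using Sym2.ind with
      | _ a b => simpa using hdeg (min a b) (max a b)
    refine le_trans (Finset.sum_le_sum hterm) ?_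
    simpa using hcard M hnd hdisj
  refine ⟨h1, h2, ?_⟩
  -- encoding
  set enc : (Fin r →₀ ℕ) → ℕ := fun s => ∑ i : Fin r, s i * D ^ (i : ℕ) with henc
  have henc_inj : ∀ s t : Fin r →₀ ℕ, (∀ i, s i < D) → (∀ i, t i < D) →
      enc s = enc t → s = t := by
    intro s t hs ht h
    set s' : ℕ → ℕ := fun j => if h : j < r then s ⟨j, h⟩ else 0 with hs'
    set t' : ℕ → ℕ := fun j => if h : j < r then t ⟨j, h⟩ else 0 with ht'
    have hes : enc s = ∑ j ∈ Finset.range r, s' j * D ^ j := by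
      rw [← Fin.sum_univ_eq_sum_range (fun j => s' j * D ^ j) r]
      exact Finset.sum_congr rfl fun i _ => by simp [hs', i.isLt]
    have het : enc t = ∑ j ∈ Finset.range r, t' j * D ^ j := by
      rw [← Fin.sum_univ_eq_sum_range (fun j => t' j * D ^ j) r]
      exact Finset.sum_congr rfl fun i _ => by simp [ht', i.isLt]
    have key := aux_base_inj D hD r s' t'
      (fun j => by by_cases hj : j < r <;> simp [hs', hj, hs, hD])
      (fun j => by by_cases hj : j < r <;> simp [ht', hj, ht, hD])
      (by rw [← hes, ← het, h])
    ext i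
    have := key i i.isLt
    simpa [hs', ht', i.isLt] using this
  -- κ on monomials
  have hmon : ∀ (s : Fin r →₀ ℕ) (c : R),
      κ (MvPolynomial.monomial s c) = Polynomial.C c * Polynomial.X ^ enc s := by
    intro s c
    rw [MvPolynomial.monomial_eq]
    have hC : κ (MvPolynomial.C c) = Polynomial.C c := by
      rw [← MvPolynomial.algebraMap_eq, AlgHom.commutes, Polynomial.algebraMap_eq]
    rw [map_mul, hC, Finsupp.prod, map_prod]
    congr 1
    have : ∀ i ∈ s.support, κ (MvPolynomial.X i ^ s i) =
        Polynomial.X ^ (s i * D ^ (i : ℕ)) := by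
      intro i _
      rw [map_pow, hκ, ← pow_mul, mul_comm]
    rw [Finset.prod_congr rfl this, Finset.prod_pow_eq_pow_sum]
    congr 1
    exact Finset.sum_subset (Finset.subset_univ s.support)
      (fun i _ hi => by simp [Finsupp.notMem_support_iff.mp hi])
  -- coefficient extraction
  have hcoeff : ∀ p : MvPolynomial (Fin r) R, (∀ i, p.degreeOf i < D) →
      ∀ s : Fin r →₀ ℕ, (∀ i, s i < D) →
      (κ p).coeff (enc s) = p.coeff s := by
    intro p hp s hs
    have hsupp : ∀ t ∈ p.support, ∀ i, t i < D := by
      intro t ht i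
      exact (MvPolynomial.degreeOf_lt_iff hD).mp (hp i) t ht
    conv_lhs => rw [MvPolynomial.as_sum p]
    rw [map_sum, Polynomial.finset_sum_coeff]
    have : ∀ t ∈ p.support,
        (κ (MvPolynomial.monomial t (p.coeff t))).coeff (enc s) =
        if t = s then p.coeff t else 0 := by
      intro t ht
      rw [hmon, Polynomial.coeff_C_mul, Polynomial.coeff_X_pow]
      have hiff : enc s = enc t ↔ t = s := by
        constructor
        · intro h; exact henc_inj t s (hsupp t ht) hs h.symm
        · intro h; rw [h]
      by_cases h : t = s <;> simp [hiff, h]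
    rw [Finset.sum_congr rfl this, Finset.sum_ite_eq' p.support s (fun t => p.coeff t)]
    by_cases h : s ∈ p.support
    · simp [h]
    · simp [h, MvPolynomial.notMem_support_iff.mp h]
  -- Part 3
  intro p hp hkp
  have hph : κ p = κ (hafnian A) := by rw [hkp, h1]
  have hhaf : ∀ i, (hafnian A).degreeOf i < D := fun i => by
    have := h2 i; omega
  apply MvPolynomial.ext
  intro s
  by_cases hsD : ∀ i, s i < D
  · rw [← hcoeff p hp s hsD, ← hcoeff (hafnian A) hhaf s hsD, hph]
  · push_neg at hsD
    obtain ⟨i, hi⟩ := hsD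
    have hz : ∀ q : MvPolynomial (Fin r) R, (∀ j, q.degreeOf j < D) → q.coeff s = 0 := by
      intro q hq
      by_contra h
      have hs : s ∈ q.support := MvPolynomial.mem_support_iff.mpr h
      have := (MvPolynomial.degreeOf_lt_iff hD).mp (hq i) s hs
      omega
    rw [hz p hp, hz (hafnian A) hhaf]
end
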